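/- arXiv:1206.5433 — 8 statements merged into one kernel-verified Lean document; each statement's English description precedes it below -/
import Mathlib

section
/- For every real q with 0 < q < 1, integers α ≥ 1 and n ≥ 0, and every real x ≥ 0, the weighted q-Euler polynomial has the closed form Ẽ_{n,q}(x|α) = ( [2:q] / ( [α:q]^n (1−q)^n ) ) · Σ_{l=0}^{n} C(n,l) (−1)^l q^{α l x} / (1 + q^{α l + 1}), where C(n,l) is the binomial coefficient. -/
open scoped BigOperators

/-- `[x:q] = (q^x - 1)/(q - 1)` with real exponentiation. -/
noncomputable def qNum (q x : ℝ) : ℝ := (q ^ x - 1) / (q - 1)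

/-- Weighted `q`-Euler polynomial `Ẽ_{n,q}(x|α) = [2:q] ∑_{m≥0} (-1)^m q^m [m+x:q^α]^n`. -/
noncomputable def qEuler (q : ℝ) (α n : ℕ) (x : ℝ) : ℝ :=
  qNum q 2 * ∑' m : ℕ, (-1 : ℝ) ^ m * q ^ m * (qNum (q ^ α) ((m : ℝ) + x)) ^ n

theorem statement0 (q : ℝ) (hq0 : 0 < q) (hq1 : q < 1)
    (α : ℕ) (hα : 1 ≤ α) (n : ℕ) (x : ℝ) (hx : 0 ≤ x) :
    qEuler q α n x =
      qNum q 2 / (qNum q α ^ n * (1 - q) ^ n) *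
        ∑ l ∈ Finset.range (n + 1),
          (n.choose l : ℝ) * (-1 : ℝ) ^ l * q ^ ((↑(α * l) : ℝ) * x) / (1 + q ^ (α * l + 1)) := by
  have hq1' : q - 1 ≠ 0 := by nlinarith
  have hqa0 : (0:ℝ) < q ^ α := pow_pos hq0 α
  have hqa1 : q ^ α < 1 := pow_lt_one₀ hq0.le hq1 (by omega)
  have hs : (1:ℝ) - q ^ α ≠ 0 := by nlinarith
  set A : ℝ := q ^ ((α:ℝ) * x) with hA
  have key : ∀ m : ℕ, (-1:ℝ)^m * q^m * (qNum (q^α) ((m:ℝ)+x))^n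
      = ∑ l ∈ Finset.range (n+1),
          ((n.choose l : ℝ) * (-1:ℝ)^l * A^l / (1 - q^α)^n) * (-(q^(α*l+1)))^m := by
    intro m
    have hB : ((q^α : ℝ)) ^ ((m:ℝ)+x) = (q^α)^m * A := by
      rw [Real.rpow_add hqa0, Real.rpow_natCast]
      congr 1
      rw [← Real.rpow_natCast q α, ← Real.rpow_mul hq0.le]
    have h1 : qNum (q^α) ((m:ℝ)+x) = (1 - (q^α)^m * A) / (1 - q^α) := by
      rw [qNum, hB]
      rw [div_eq_div_iff (by nlinarith) hs]
      ring
    rw [h1, div_pow]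
    have h2 : (1 - (q^α)^m * A)^n
        = ∑ l ∈ Finset.range (n+1), (-( (q^α)^m * A))^l * 1^(n-l) * (n.choose l : ℝ) := by
      rw [← add_pow]
      ring_nf
    rw [h2, Finset.sum_div, Finset.mul_sum]
    apply Finset.sum_congr rfl
    intro l _
    have e1 : (-((q^α)^m*A))^l = (-1:ℝ)^l * ((q^α)^m)^l * A^l := by
      rw [neg_pow, mul_pow]; ring
    have e2 : (-(q^(α*l+1)))^m = (-1:ℝ)^m * (q^(α*l+1))^m := by
      rw [neg_pow]
    rw [e1, e2]
    ring
  have hsum : ∀ l ∈ Finset.range (n+1),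
      Summable (fun m:ℕ => ((n.choose l : ℝ) * (-1:ℝ)^l * A^l / (1 - q^α)^n) * (-(q^(α*l+1)))^m) := by
    intro l _
    apply Summable.mul_left
    apply summable_geometric_of_norm_lt_one
    rw [norm_neg, Real.norm_eq_abs, abs_of_pos (pow_pos hq0 _)]
    exact pow_lt_one₀ hq0.le hq1 (by omega)
  have geo : ∀ l : ℕ, ∑' m:ℕ, (-(q^(α*l+1)))^m = (1 + q^(α*l+1))⁻¹ := by
    intro l
    rw [tsum_geometric_of_norm_lt_one (by
      rw [norm_neg, Real.norm_eq_abs, abs_of_pos (pow_pos hq0 _)]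
      exact pow_lt_one₀ hq0.le hq1 (by omega))]
    ring_nf
  unfold qEuler
  rw [tsum_congr key, Summable.tsum_finsetSum hsum]
  have hAl : ∀ l : ℕ, A ^ l = q ^ ((↑(α * l) : ℝ) * x) := by
    intro l
    rw [hA, ← Real.rpow_natCast (q ^ ((α:ℝ)*x)) l, ← Real.rpow_mul hq0.le]
    push_cast
    ring_nf
  have hnum : qNum q α ^ n * (1 - q) ^ n = (1 - q^α)^n := by
    rw [← mul_pow]
    congr 1
    rw [qNum, Real.rpow_natCast]
    field_simp
    ring
  rw [hnum, Finset.mul_sum, Finset.mul_sum]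
  apply Finset.sum_congr rfl
  intro l _
  rw [tsum_mul_left, geo l, hAl l]
  have h1q : (1:ℝ) + q^(α*l+1) ≠ 0 := by positivity
  have hsn : ((1:ℝ) - q^α)^n ≠ 0 := pow_ne_zero _ hs
  field_simp
end

section
/- Let q be real with 0 < q < 1 and let α ≥ 1, n ≥ 0 be integers. For every even positive integer k, Ẽ_{n,q}(α) − q^k · Ẽ_{n,q}(k|α) = [2:q] · Σ_{l=0}^{k−1} (−1)^l q^l [l:q^α]^n. -/
/-!
Shifting the summation index by `k` turns `q^k Ẽ_{n,q}(k|α)` into `(-1)^k` times the tail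
`∑_{m ≥ k}` of the series defining `Ẽ_{n,q}(α)`; for even `k` the sign is `1`, so the difference
is the sum of the first `k` terms. The splitting is legitimate because `0 ≤ [m:q^α] ≤ 1/(1-q^α)`,
so the series is dominated by a geometric one.
-/

open scoped BigOperators

lemma abs_qNum_natCast_le {Q : ℝ} (hQ0 : 0 ≤ Q) (hQ1 : Q < 1) (m : ℕ) :
    |qNum Q m| ≤ (1 - Q)⁻¹ := by
  have hQm : Q ^ m ≤ 1 := pow_le_one₀ hQ0 hQ1.le
  have hQm0 : 0 ≤ Q ^ m := pow_nonneg hQ0 m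
  have h1Q : 0 < 1 - Q := by linarith
  have hform : qNum Q m = (1 - Q ^ m) / (1 - Q) := by
    rw [qNum, Real.rpow_natCast, ← neg_sub, ← neg_sub 1 Q, neg_div_neg_eq]
  rw [hform, abs_of_nonneg (by positivity), div_eq_mul_inv]
  exact mul_le_of_le_one_left (inv_nonneg.2 h1Q.le) (by linarith)

noncomputable def qEulerTerm (q : ℝ) (α n m : ℕ) : ℝ :=
  (-1 : ℝ) ^ m * q ^ m * qNum (q ^ α) m ^ n

lemma summable_qEulerTerm {q : ℝ} (hq0 : 0 < q) (hq1 : q < 1) {α : ℕ} (hα : 1 ≤ α)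
    (n : ℕ) : Summable (qEulerTerm q α n) := by
  have hQ0 : 0 ≤ q ^ α := pow_nonneg hq0.le α
  have hQ1 : q ^ α < 1 := pow_lt_one₀ hq0.le hq1 (by omega)
  have hbound (m : ℕ) : ‖qEulerTerm q α n m‖ ≤ ((1 - q ^ α)⁻¹) ^ n * q ^ m := by
    rw [qEulerTerm, Real.norm_eq_abs, abs_mul, abs_mul, abs_pow, abs_neg, abs_one, one_pow,
      one_mul, abs_pow, abs_of_pos hq0, abs_pow, mul_comm]
    gcongr
    exact abs_qNum_natCast_le hQ0 hQ1 m
  exact Summable.of_norm_bounded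
    ((summable_geometric_of_lt_one hq0.le hq1).mul_left _) hbound

lemma qEuler_zero_eq_tsum (q : ℝ) (α n : ℕ) :
    qEuler q α n 0 = qNum q 2 * ∑' m, qEulerTerm q α n m := by
  simp only [qEuler, qEulerTerm, add_zero]

lemma pow_mul_qEuler_natCast (q : ℝ) (α n k : ℕ) :
    q ^ k * qEuler q α n k = (-1) ^ k * qNum q 2 * ∑' m, qEulerTerm q α n (m + k) := by
  rw [qEuler, mul_left_comm, mul_comm ((-1) ^ k), mul_assoc]
  congr 1
  rw [← tsum_mul_left, ← tsum_mul_left]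
  have hsign : (-1 : ℝ) ^ k * (-1) ^ k = 1 := by rw [← mul_pow]; norm_num
  refine tsum_congr fun m => ?_
  rw [qEulerTerm, Nat.cast_add, pow_add, pow_add]
  linear_combination -(q ^ k * q ^ m * qNum (q ^ α) (m + k) ^ n * (-1) ^ m) * hsign

theorem statement1_general (q : ℝ) (hq0 : 0 < q) (hq1 : q < 1)
    (α : ℕ) (hα : 1 ≤ α) (n : ℕ) (k : ℕ) (hke : Even k) :
    qEuler q α n 0 - q ^ k * qEuler q α n k =
      qNum q 2 * ∑ l ∈ Finset.range k, (-1 : ℝ) ^ l * q ^ l * (qNum (q ^ α) l) ^ n := by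
  rw [qEuler_zero_eq_tsum, pow_mul_qEuler_natCast, hke.neg_one_pow, one_mul, ← mul_sub,
    ← (summable_qEulerTerm hq0 hq1 hα n).sum_add_tsum_nat_add k, add_sub_cancel_right]
  rfl

theorem statement1 (q : ℝ) (hq0 : 0 < q) (hq1 : q < 1)
    (α : ℕ) (hα : 1 ≤ α) (n : ℕ) (k : ℕ) (hk : 0 < k) (hke : Even k) :
    qEuler q α n 0 - q ^ k * qEuler q α n k =
      qNum q 2 * ∑ l ∈ Finset.range k, (-1 : ℝ) ^ l * q ^ l * (qNum (q ^ α) l) ^ n :=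
  statement1_general q hq0 hq1 α hα n k hke
end

section
/- Let q be real with 0 < q < 1 and let α ≥ 1, n ≥ 0 be integers. For every odd positive integer k, q^k · Ẽ_{n,q}(k|α) + Ẽ_{n,q}(α) = [2:q] · Σ_{l=0}^{k−1} (−1)^l q^l [l:q^α]^n. -/
open scoped BigOperators

/-! Since `k` is odd, multiplying the series for `Ẽ(x + k)` by `q^k` turns it into minus the tail
`∑_{m ≥ k} (-1)^m q^m [m + x]^n` of the series for `Ẽ(x)`; adding the two leaves the first `k`
terms. -/

lemma abs_qNum_natCast_add_le {Q : ℝ} (hQ0 : 0 < Q) (hQ1 : Q < 1) (m : ℕ) (x : ℝ) :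
    |qNum Q (m + x)| ≤ (1 + Q ^ x) / (1 - Q) := by
  have hpow : Q ^ ((m : ℝ) + x) ≤ Q ^ x := by
    rw [Real.rpow_add hQ0, Real.rpow_natCast]
    exact mul_le_of_le_one_left (Real.rpow_nonneg hQ0.le x) (pow_le_one₀ hQ0.le hQ1.le)
  rw [qNum, abs_div, abs_of_neg (sub_neg.mpr hQ1), neg_sub]
  gcongr
  calc |Q ^ ((m : ℝ) + x) - 1| ≤ |Q ^ ((m : ℝ) + x)| + |1| := abs_sub _ _
    _ ≤ 1 + Q ^ x := by
      rw [abs_one, abs_of_nonneg (Real.rpow_nonneg hQ0.le _)]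
      linarith

lemma summable_qEuler_series {q : ℝ} (hq0 : 0 < q) (hq1 : q < 1) {α : ℕ} (hα : 1 ≤ α)
    (n : ℕ) (x : ℝ) :
    Summable fun m : ℕ => (-1 : ℝ) ^ m * q ^ m * (qNum (q ^ α) ((m : ℝ) + x)) ^ n := by
  have hQ0 : 0 < q ^ α := pow_pos hq0 α
  have hQ1 : q ^ α < 1 := pow_lt_one₀ hq0.le hq1 (by omega)
  refine Summable.of_norm_bounded
    ((summable_geometric_of_lt_one hq0.le hq1).mul_left (((1 + (q ^ α) ^ x) / (1 - q ^ α)) ^ n))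
    fun m => ?_
  rw [norm_mul, norm_mul, norm_pow, norm_pow, norm_neg, norm_one, one_pow, one_mul,
    Real.norm_eq_abs, Real.norm_eq_abs, abs_of_pos hq0, mul_comm, abs_pow]
  gcongr
  exact abs_qNum_natCast_add_le hQ0 hQ1 m x

theorem qEuler_add_odd {q : ℝ} (hq0 : 0 < q) (hq1 : q < 1) {α : ℕ} (hα : 1 ≤ α) (n : ℕ)
    {k : ℕ} (hk : Odd k) (x : ℝ) :
    q ^ k * qEuler q α n (x + k) + qEuler q α n x =
      qNum q 2 * ∑ l ∈ Finset.range k, (-1 : ℝ) ^ l * q ^ l * (qNum (q ^ α) (l + x)) ^ n := by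
  set a : ℕ → ℝ := fun m => (-1 : ℝ) ^ m * q ^ m * (qNum (q ^ α) ((m : ℝ) + x)) ^ n with ha
  have hshift : ∀ m : ℕ,
      q ^ k * ((-1 : ℝ) ^ m * q ^ m * (qNum (q ^ α) ((m : ℝ) + (x + k))) ^ n) = -a (m + k) := by
    intro m
    rw [show (m : ℝ) + (x + k) = ((m + k : ℕ) : ℝ) + x by push_cast; ring]
    simp only [ha, pow_add, hk.neg_one_pow]
    ring
  have htail : q ^ k * qEuler q α n (x + k) = qNum q 2 * -∑' m : ℕ, a (m + k) := by
    rw [qEuler, mul_left_comm, ← tsum_mul_left, ← tsum_neg]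
    simp only [hshift]
  rw [htail, qEuler, ← (summable_qEuler_series hq0 hq1 hα n x).sum_add_tsum_nat_add k]
  ring

theorem statement2_general (q : ℝ) (hq0 : 0 < q) (hq1 : q < 1)
    (α : ℕ) (hα : 1 ≤ α) (n : ℕ) (k : ℕ) (hko : Odd k) :
    q ^ k * qEuler q α n k + qEuler q α n 0 =
      qNum q 2 * ∑ l ∈ Finset.range k, (-1 : ℝ) ^ l * q ^ l * (qNum (q ^ α) l) ^ n := by
  simpa only [zero_add, add_zero] using qEuler_add_odd hq0 hq1 hα n hko 0

theorem statement2 (q : ℝ) (hq0 : 0 < q) (hq1 : q < 1)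
    (α : ℕ) (hα : 1 ≤ α) (n : ℕ) (k : ℕ) (hk : 0 < k) (hko : Odd k) :
    q ^ k * qEuler q α n k + qEuler q α n 0 =
      qNum q 2 * ∑ l ∈ Finset.range k, (-1 : ℝ) ^ l * q ^ l * (qNum (q ^ α) l) ^ n :=
  statement2_general q hq0 hq1 α hα n k hko
end

section
/- Let q be real with 0 < q < 1 and let α ≥ 1, n ≥ 0 be integers. For every even positive integer k, [2:q] · Σ_{l=0}^{k−1} (−1)^l q^l [l:q^α]^n = (1 − q^{k(1+αn)}) · Ẽ_{n,q}(α) − q^k · Σ_{l=0}^{n−1} C(n,l) q^{α l k} Ẽ_{l,q}(α) [k:q^α]^{n−l}. -/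
open scoped BigOperators

theorem statement4 (q : ℝ) (hq0 : 0 < q) (hq1 : q < 1)
    (α : ℕ) (hα : 1 ≤ α) (n : ℕ) (k : ℕ) (hk : 0 < k) (hke : Even k) :
    qNum q 2 * ∑ l ∈ Finset.range k, (-1 : ℝ) ^ l * q ^ l * (qNum (q ^ α) l) ^ n =
      (1 - q ^ (k * (1 + α * n))) * qEuler q α n 0 -
        q ^ k * ∑ l ∈ Finset.range n,
          (n.choose l : ℝ) * q ^ (α * l * k) * qEuler q α l 0 *
            (qNum (q ^ α) k) ^ (n - l) := by
  have hQ0 : (0:ℝ) < q ^ α := pow_pos hq0 α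
  have hQ1 : q ^ α < 1 := pow_lt_one₀ hq0.le hq1 (by omega)
  set Q : ℝ := q ^ α with hQdef
  have hQne : Q ≠ 1 := ne_of_lt hQ1
  have hnum : ∀ m : ℕ, qNum Q (m : ℝ) = ∑ i ∈ Finset.range m, Q ^ i := by
    intro m
    rw [qNum, Real.rpow_natCast, geom_sum_eq hQne]
  have hb0 : ∀ m : ℕ, 0 ≤ qNum Q (m:ℝ) := fun m => by
    rw [hnum]; exact Finset.sum_nonneg fun i _ => pow_nonneg hQ0.le i
  have hb1 : ∀ m : ℕ, qNum Q (m:ℝ) ≤ (1-Q)⁻¹ := fun m => by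
    rw [hnum]
    calc ∑ i ∈ Finset.range m, Q^i ≤ ∑' i : ℕ, Q^i :=
          Summable.sum_le_tsum _ (fun i _ => pow_nonneg hQ0.le i)
            (summable_geometric_of_lt_one hQ0.le hQ1)
      _ = (1-Q)⁻¹ := tsum_geometric_of_lt_one hQ0.le hQ1
  have hsumm : ∀ l : ℕ, Summable (fun m : ℕ => (-1:ℝ)^m * q^m * (qNum Q (m:ℝ))^l) := by
    intro l
    apply Summable.of_abs
    apply Summable.of_nonneg_of_le (fun m => abs_nonneg _) (fun m => ?_)
      ((summable_geometric_of_lt_one hq0.le hq1).mul_right ((1-Q)⁻¹ ^ l))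
    rw [abs_mul, abs_mul, abs_pow, abs_neg, abs_one, one_pow, one_mul,
        abs_of_nonneg (pow_nonneg hq0.le m), abs_pow, abs_of_nonneg (hb0 m)]
    exact mul_le_mul_of_nonneg_left (pow_le_pow_left₀ (hb0 m) (hb1 m) l)
      (pow_nonneg hq0.le m)
  set E : ℕ → ℝ := fun l => ∑' m : ℕ, (-1:ℝ)^m * q^m * (qNum Q (m:ℝ))^l with hEdef
  have hE : ∀ l, qEuler q α l 0 = qNum q 2 * E l := by
    intro l; simp only [qEuler, hEdef, add_zero, ← hQdef]
  have hadd : ∀ j : ℕ, qNum Q ((↑(j + k) : ℕ) : ℝ)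
      = Q ^ k * qNum Q (j:ℝ) + qNum Q (k:ℝ) := by
    intro j
    have hQsub : Q - 1 ≠ 0 := sub_ne_zero.mpr hQne
    rw [qNum, qNum, qNum, Real.rpow_natCast, Real.rpow_natCast, Real.rpow_natCast,
      pow_add]
    field_simp
    ring
  have htail : ∀ j : ℕ,
      (-1:ℝ)^(j+k) * q^(j+k) * (qNum Q ((↑(j + k) : ℕ) : ℝ))^n
        = ∑ l ∈ Finset.range (n+1),
            (q^k * ((n.choose l : ℝ) * Q^(k*l) * (qNum Q (k:ℝ))^(n-l))) *
              ((-1:ℝ)^j * q^j * (qNum Q (j:ℝ))^l) := by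
    intro j
    rw [hadd, add_pow, Finset.mul_sum]
    refine Finset.sum_congr rfl fun l hl => ?_
    rw [mul_pow, ← pow_mul, pow_add, pow_add, hke.neg_one_pow]
    ring
  have hts : (∑' j : ℕ, (-1:ℝ)^(j+k) * q^(j+k) * (qNum Q ((↑(j+k) : ℕ) : ℝ))^n)
      = ∑ l ∈ Finset.range (n+1),
          (q^k * ((n.choose l : ℝ) * Q^(k*l) * (qNum Q (k:ℝ))^(n-l))) * E l := by
    rw [tsum_congr htail, Summable.tsum_finsetSum (fun l _ => (hsumm l).mul_left _)]
    exact Finset.sum_congr rfl fun l _ => tsum_mul_left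
  have hsplit : (∑ l ∈ Finset.range k, (-1:ℝ)^l * q^l * (qNum Q (l:ℝ))^n)
      = E n - ∑' j : ℕ, (-1:ℝ)^(j+k) * q^(j+k) * (qNum Q ((↑(j+k) : ℕ) : ℝ))^n := by
    have h := Summable.sum_add_tsum_nat_add k (hsumm n)
    simp only [hEdef]
    linarith [h]
  rw [hsplit, hts, Finset.sum_range_succ, hE n]
  have hcn : qNum q 2 * ((q^k * ((n.choose n : ℝ) * Q^(k*n) * (qNum Q (k:ℝ))^(n-n))) * E n)
      = q ^ (k * (1 + α * n)) * (qNum q 2 * E n) := by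
    rw [Nat.choose_self, Nat.sub_self, pow_zero, hQdef, ← pow_mul]
    push_cast
    ring
  have hsum_eq : qNum q 2 * (∑ l ∈ Finset.range n,
        (q^k * ((n.choose l : ℝ) * Q^(k*l) * (qNum Q (k:ℝ))^(n-l))) * E l)
      = q ^ k * ∑ l ∈ Finset.range n,
          (n.choose l : ℝ) * q ^ (α * l * k) * (qNum q 2 * E l) *
            (qNum Q (k:ℝ))^(n-l) := by
    rw [Finset.mul_sum, Finset.mul_sum]
    refine Finset.sum_congr rfl fun l _ => ?_
    rw [hQdef, ← pow_mul]
    ring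
  have hsum_eq2 : (∑ l ∈ Finset.range n,
        (n.choose l : ℝ) * q ^ (α * l * k) * qEuler q α l 0 * (qNum Q (k:ℝ))^(n-l))
      = ∑ l ∈ Finset.range n,
          (n.choose l : ℝ) * q ^ (α * l * k) * (qNum q 2 * E l) * (qNum Q (k:ℝ))^(n-l) := by
    exact Finset.sum_congr rfl fun l _ => by rw [hE l]
  rw [hsum_eq2]
  linear_combination (-1 : ℝ) * hsum_eq - hcn
end

section
/- Let q be real with 0 < q < 1 and let α ≥ 1, n ≥ 0 be integers. For every odd positive integer k, [2:q] · Σ_{l=0}^{k−1} (−1)^l q^l [l:q^α]^n = (q^{k(1+αn)} + 1) · Ẽ_{n,q}(α) + q^k · Σ_{l=0}^{n−1} C(n,l) q^{α l k} Ẽ_{l,q}(α) [k:q^α]^{n−l}. -/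
set_option maxHeartbeats 1000000


open scoped BigOperators

lemma qNum_eq {Q : ℝ} (x : ℝ) : qNum Q x = (1 - Q ^ x) / (1 - Q) := by
  unfold qNum
  rw [← neg_div_neg_eq]; ring_nf

lemma qNum_bounds {Q : ℝ} (hQ0 : 0 < Q) (hQ1 : Q < 1) {x : ℝ} (hx : 0 ≤ x) :
    0 ≤ qNum Q x ∧ qNum Q x ≤ 1 / (1 - Q) := by
  rw [qNum_eq]
  have h1 : Q ^ x ≤ 1 := Real.rpow_le_one hQ0.le hQ1.le hx
  have h2 : 0 < Q ^ x := Real.rpow_pos_of_pos hQ0 x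
  have h3 : 0 < 1 - Q := by linarith
  refine ⟨div_nonneg (by linarith) h3.le, ?_⟩
  gcongr
  linarith

lemma summable_aux (q : ℝ) (hq0 : 0 < q) (hq1 : q < 1) (α n : ℕ) (hα : 1 ≤ α) (x : ℝ) (hx : 0 ≤ x) :
    Summable (fun m : ℕ => (-1:ℝ)^m * q^m * (qNum (q^α) ((m:ℝ)+x))^n) := by
  have hQ0 : 0 < q^α := pow_pos hq0 α
  have hQ1 : q^α < 1 := pow_lt_one₀ hq0.le hq1 (by omega)
  apply Summable.of_norm
  refine Summable.of_nonneg_of_le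
    (fun m => norm_nonneg _) ?_ ((summable_geometric_of_lt_one hq0.le hq1).mul_left ((1/(1-q^α))^n))
  · intro m
    have hb := qNum_bounds hQ0 hQ1 (x := (m:ℝ)+x) (by positivity)
    rw [norm_mul, norm_mul, norm_pow, norm_pow, norm_neg, norm_one, one_pow, one_mul,
      Real.norm_eq_abs, Real.norm_eq_abs, abs_of_pos hq0, abs_pow, abs_of_nonneg hb.1,
      mul_comm]
    gcongr
    exacts [hb.1, hb.2]

lemma qNum_shift {Q : ℝ} (hQ0 : 0 < Q) (hQ1 : Q < 1) (x : ℝ) (k : ℕ) :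
    qNum Q (x + (k:ℝ)) = qNum Q (k:ℝ) + Q ^ k * qNum Q x := by
  unfold qNum
  rw [Real.rpow_add hQ0, Real.rpow_natCast]
  have h : Q - 1 ≠ 0 := by linarith
  field_simp
  ring

theorem statement5 (q : ℝ) (hq0 : 0 < q) (hq1 : q < 1)
    (α : ℕ) (hα : 1 ≤ α) (n : ℕ) (k : ℕ) (hk : 0 < k) (hko : Odd k) :
    qNum q 2 * ∑ l ∈ Finset.range k, (-1 : ℝ) ^ l * q ^ l * (qNum (q ^ α) l) ^ n =
      (q ^ (k * (1 + α * n)) + 1) * qEuler q α n 0 +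
        q ^ k * ∑ l ∈ Finset.range n,
          (n.choose l : ℝ) * q ^ (α * l * k) * qEuler q α l 0 *
            (qNum (q ^ α) k) ^ (n - l) := by
  have hα0 : α ≠ 0 := by omega
  have hQ0 : 0 < q ^ α := pow_pos hq0 α
  have hQ1 : q ^ α < 1 := pow_lt_one₀ hq0.le hq1 hα0
  set F : ℕ → ℕ → ℝ := fun j m => (-1:ℝ)^m * q^m * (qNum (q^α) ((m:ℝ)+0))^j with hF
  have hsumF : ∀ j, Summable (F j) := fun j => summable_aux q hq0 hq1 α j hα 0 le_rfl
  set G : ℕ → ℝ := fun m => (-1:ℝ)^m * q^m * (qNum (q^α) ((m:ℝ)+(k:ℝ)))^n with hG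
  have hsumG : Summable G := summable_aux q hq0 hq1 α n hα k (Nat.cast_nonneg k)
  have hE : ∀ j, qEuler q α j 0 = qNum q 2 * ∑' m, F j m := fun j => rfl
  have hshift : ∀ m : ℕ, F n (m + k) = -(q^k) * G m := by
    intro m
    simp only [hF, hG]
    have h1 : ((-1:ℝ))^(m+k) = -(-1:ℝ)^m := by
      rw [pow_add, hko.neg_one_pow]; ring
    push_cast
    rw [h1, pow_add, add_zero]
    ring
  have hkey : ∑ l ∈ Finset.range k, F n l = (∑' m, F n m) + q^k * ∑' m, G m := by
    have h := Summable.sum_add_tsum_nat_add (f := F n) k (hsumF n)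
    have h2 : ∑' i, F n (i + k) = (-(q^k)) * ∑' m, G m := by
      rw [tsum_congr hshift]
      exact tsum_mul_left
    rw [h2] at h
    linarith
  have hGexp : ∑' m, G m = ∑ l ∈ Finset.range (n+1),
      (n.choose l : ℝ) * (q^α)^(k*l) * (qNum (q^α) (k:ℝ))^(n-l) * ∑' m, F l m := by
    have h1 : ∀ m : ℕ, G m = ∑ l ∈ Finset.range (n+1),
        (n.choose l : ℝ) * (q^α)^(k*l) * (qNum (q^α) (k:ℝ))^(n-l) * F l m := by
      intro m
      simp only [hG, hF]
      rw [show ((m:ℝ) + (k:ℝ)) = ((m:ℝ)+0) + (k:ℝ) by ring, qNum_shift hQ0 hQ1 _ k,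
        add_comm (qNum (q^α) (k:ℝ)), add_pow, Finset.mul_sum]
      apply Finset.sum_congr rfl
      intro l hl
      rw [mul_pow, ← pow_mul]
      ring
    rw [tsum_congr h1, Summable.tsum_finsetSum (fun l _ => (hsumF l).mul_left _)]
    exact Finset.sum_congr rfl fun l _ => tsum_mul_left
  have hL : ∑ l ∈ Finset.range k, (-1:ℝ)^l * q^l * (qNum (q^α) l)^n
      = ∑ l ∈ Finset.range k, F n l := by
    refine Finset.sum_congr rfl fun l _ => by simp [hF]
  have hpow : ∀ l : ℕ, ((q:ℝ)^α)^(k*l) = q^(α*l*k) := by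
    intro l; rw [← pow_mul, mul_comm k l, ← mul_assoc]
  have hpown : q^k * (q^α)^(k*n) = q^(k*(1+α*n)) := by
    rw [← pow_mul, ← pow_add]; congr 1; ring
  calc qNum q 2 * ∑ l ∈ Finset.range k, (-1:ℝ)^l * q^l * (qNum (q^α) l)^n
      = qNum q 2 * ((∑' m, F n m) + q^k * ∑' m, G m) := by rw [hL, hkey]
    _ = qEuler q α n 0 + q^k * (qNum q 2 * ∑' m, G m) := by rw [hE n]; ring
    _ = qEuler q α n 0 + q^k * ∑ l ∈ Finset.range (n+1),
          (n.choose l : ℝ) * (q^α)^(k*l) * (qNum (q^α) (k:ℝ))^(n-l) * qEuler q α l 0 := by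
        rw [hGexp, Finset.mul_sum]
        congr 2
        refine Finset.sum_congr rfl fun l _ => by rw [hE l]; ring
    _ = _ := by
        rw [Finset.sum_range_succ]
        simp only [Nat.choose_self, Nat.cast_one, Nat.sub_self, pow_zero, one_mul, mul_one]
        have hS : ∑ l ∈ Finset.range n,
            (n.choose l : ℝ) * (q^α)^(k*l) * (qNum (q^α) (k:ℝ))^(n-l) * qEuler q α l 0
            = ∑ l ∈ Finset.range n,
            (n.choose l : ℝ) * q^(α*l*k) * qEuler q α l 0 * (qNum (q^α) (k:ℝ))^(n-l) := by
          refine Finset.sum_congr rfl fun l _ => by rw [hpow l]; ring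
        rw [hS, ← hpown]
        ring
end

section
/- (Theorem 4, distribution relation.) For every real q with 0 < q < 1, integers α ≥ 1 and n ≥ 0, every real x ≥ 0, every odd positive integer d and Dirichlet character χ modulo d, Ẽ^χ_{n,q}(dx|α) = ( [d:q^α]^n / [d:−q] ) · Σ_{a=0}^{d−1} (−1)^a χ(a) q^a Ẽ_{n,q^d}( x + a/d | α ), where [d:−q] = ((−q)^d − 1)/(−q − 1) = (1 + q^d)/(1 + q). -/
open scoped BigOperators

/-- `[d:-q] = ((-q)^d - 1)/(-q - 1)` for a natural number `d`. -/
noncomputable def qNumNeg (q : ℝ) (d : ℕ) : ℝ := ((-q) ^ d - 1) / (-q - 1)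

/-- Dirichlet-type weighted `q`-Euler polynomial
`Ẽ^χ_{n,q}(x|α) = [2:q] ∑_{m≥0} q^m χ(m) (-1)^m [x+m:q^α]^n`. -/
noncomputable def qEulerChi (q : ℝ) (d : ℕ) (χ : DirichletCharacter ℂ d) (α n : ℕ)
    (x : ℝ) : ℂ :=
  (qNum q 2 : ℂ) *
    ∑' m : ℕ, (q : ℂ) ^ m * χ (m : ZMod d) * (-1 : ℂ) ^ m *
      ((qNum (q ^ α) (x + (m : ℝ)) : ℝ) : ℂ) ^ n

/-!
Split the series defining `Ẽ^χ_{n,q}(dx|α)` along the residue classes `m = a + d k` mod `d`.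
On a class `χ(m) = χ(a)`, `(-1)^m = (-1)^a (-1)^k` because `d` is odd, and
`[dx + a + dk : q^α] = [d : q^α] [k + x + a/d : q^{dα}]`, so the class contributes
`(-1)^a χ(a) q^a [d:q^α]^n Ẽ_{n,q^d}(x + a/d|α) / [2:q^d]`. Finally
`[2:q] / [2:q^d] = (1 + q)/(1 + q^d) = 1/[d:-q]`.
-/

open Finset

lemma tsum_eq_sum_range_tsum {R : Type*} [AddCommGroup R] [UniformSpace R] [IsUniformAddGroup R]
    [CompleteSpace R] [T0Space R] {f : ℕ → R} (hf : Summable f) {N : ℕ} (hN : N ≠ 0) :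
    ∑' m, f m = ∑ a ∈ range N, ∑' k, f (a + N * k) := by
  have : NeZero N := ⟨hN⟩
  rw [Nat.sumByResidueClasses hf N]
  exact sum_nbij' (fun j => j.val) (fun a => (a : ZMod N)) (by simp [ZMod.val_lt])
    (by simp) (by simp) (fun a ha => ZMod.val_cast_of_lt (mem_range.1 ha)) (by simp)

lemma qNum_one (y : ℝ) : qNum 1 y = 0 := by simp [qNum]

lemma qNum_zero (t : ℝ) : qNum t 0 = 0 := by simp [qNum]

lemma qNum_eq_one_sub_div (t y : ℝ) : qNum t y = (1 - t ^ y) / (1 - t) := by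
  rw [qNum, ← neg_div_neg_eq, neg_sub, neg_sub]

lemma qNum_two {t : ℝ} (ht : t ≠ 1) : qNum t 2 = t + 1 := by
  have : t - 1 ≠ 0 := sub_ne_zero.2 ht
  rw [qNum, Real.rpow_two]
  field_simp
  ring

lemma qNumNeg_of_odd {d : ℕ} (hd : Odd d) (q : ℝ) : qNumNeg q d = (q ^ d + 1) / (q + 1) := by
  rw [qNumNeg, hd.neg_pow, ← neg_div_neg_eq]
  congr 1 <;> ring

-- At `t = 1` both sides are `0`, because `qNum 1 y = 0 / 0 = 0`.
lemma qNum_natCast_mul {t : ℝ} (ht : 0 < t) (d : ℕ) (y : ℝ) :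
    qNum t (d * y) = qNum t d * qNum (t ^ d) y := by
  rcases eq_or_ne t 1 with rfl | ht1
  · simp [qNum_one]
  rcases eq_or_ne d 0 with rfl | hd
  · simp [qNum_zero]
  have htd : t ^ d - 1 ≠ 0 := sub_ne_zero.2 ((pow_eq_one_iff_of_nonneg ht.le hd).not.2 ht1)
  have : t - 1 ≠ 0 := sub_ne_zero.2 ht1
  rw [qNum, qNum, qNum, Real.rpow_natCast_mul ht.le, Real.rpow_natCast]
  field_simp

lemma abs_qNum_le {t : ℝ} (ht0 : 0 < t) (ht1 : t ≤ 1) {y : ℝ} (hy : 0 ≤ y) :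
    |qNum t y| ≤ (1 - t)⁻¹ := by
  have h1 : t ^ y ≤ 1 := Real.rpow_le_one ht0.le ht1 hy
  have h0 : 0 < t ^ y := Real.rpow_pos_of_pos ht0 y
  rw [qNum_eq_one_sub_div, abs_of_nonneg (div_nonneg (by linarith) (by linarith)), ← one_div]
  exact div_le_div_of_nonneg_right (by linarith) (by linarith)

lemma summable_qEulerChi_term {q : ℝ} (hq0 : 0 < q) (hq1 : q < 1) {d : ℕ}
    (χ : DirichletCharacter ℂ d) (α n : ℕ) {x : ℝ} (hx : 0 ≤ x) :
    Summable fun m : ℕ => (q : ℂ) ^ m * χ (m : ZMod d) * (-1 : ℂ) ^ m *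
      ((qNum (q ^ α) (x + (m : ℝ)) : ℝ) : ℂ) ^ n := by
  refine Summable.of_norm_bounded
    ((summable_geometric_of_lt_one hq0.le hq1).mul_left (((1 - q ^ α)⁻¹) ^ n)) fun m => ?_
  have hqα : q ^ α ≤ 1 := pow_le_one₀ hq0.le hq1.le
  simp only [norm_mul, norm_pow, norm_neg, norm_one, one_pow, mul_one, Complex.norm_real,
    Real.norm_eq_abs, abs_of_pos hq0]
  calc q ^ m * ‖χ (m : ZMod d)‖ * |qNum (q ^ α) (x + m)| ^ n
      ≤ q ^ m * 1 * ((1 - q ^ α)⁻¹) ^ n := by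
        gcongr
        · exact χ.norm_le_one _
        · exact abs_qNum_le (pow_pos hq0 α) hqα (by positivity)
    _ = ((1 - q ^ α)⁻¹) ^ n * q ^ m := by ring

lemma qEulerChi_term_add_mul {q : ℝ} (hq : 0 < q) {d : ℕ} (hd : Odd d)
    (χ : DirichletCharacter ℂ d) (α n : ℕ) (x : ℝ) (a k : ℕ) :
    (q : ℂ) ^ (a + d * k) * χ ((a + d * k : ℕ) : ZMod d) * (-1 : ℂ) ^ (a + d * k) *
        ((qNum (q ^ α) (d * x + ((a + d * k : ℕ) : ℝ)) : ℝ) : ℂ) ^ n =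
      (-1 : ℂ) ^ a * χ (a : ZMod d) * (q : ℂ) ^ a * ((qNum (q ^ α) d : ℝ) : ℂ) ^ n *
        ((-1 : ℂ) ^ k * ((q ^ d : ℝ) : ℂ) ^ k *
          ((qNum ((q ^ d) ^ α) (k + (x + a / d)) : ℝ) : ℂ) ^ n) := by
  have hd0 : (d : ℝ) ≠ 0 := Nat.cast_ne_zero.2 hd.pos.ne'
  have harg : d * x + ((a + d * k : ℕ) : ℝ) = d * (k + (x + a / d)) := by
    push_cast
    field_simp
    ring
  have hχ : χ ((a + d * k : ℕ) : ZMod d) = χ (a : ZMod d) := by simp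
  rw [harg, qNum_natCast_mul (pow_pos hq α), ← pow_mul, ← pow_mul, mul_comm α d, hχ,
    pow_add, pow_add, pow_mul, pow_mul, hd.neg_one_pow]
  push_cast
  ring

lemma ofReal_qEuler {p : ℝ} (hp : p ≠ 1) (α n : ℕ) (y : ℝ) :
    ((qEuler p α n y : ℝ) : ℂ) =
      ((p + 1 : ℝ) : ℂ) * ∑' k : ℕ, (-1 : ℂ) ^ k * (p : ℂ) ^ k *
        ((qNum (p ^ α) (k + y) : ℝ) : ℂ) ^ n := by
  rw [qEuler, qNum_two hp, Complex.ofReal_mul, Complex.ofReal_tsum]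
  push_cast
  rfl

theorem statement9_general (q : ℝ) (hq0 : 0 < q) (hq1 : q < 1)
    (α : ℕ) (n : ℕ) (x : ℝ) (hx : 0 ≤ x)
    (d : ℕ) (hdo : Odd d) (χ : DirichletCharacter ℂ d) :
    qEulerChi q d χ α n ((d : ℝ) * x) =
      (((qNum (q ^ α) d) ^ n / qNumNeg q d : ℝ) : ℂ) *
        ∑ a ∈ Finset.range d,
          (-1 : ℂ) ^ a * χ (a : ZMod d) * (q : ℂ) ^ a *
            ((qEuler (q ^ d) α n (x + (a : ℝ) / d) : ℝ) : ℂ) := by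
  have hqd : q ^ d ≠ 1 := (pow_lt_one₀ hq0.le hq1 hdo.pos.ne').ne
  have hq : (q : ℂ) + 1 ≠ 0 := by exact_mod_cast (by positivity : q + 1 ≠ 0)
  have hq' : (q : ℂ) ^ d + 1 ≠ 0 := by exact_mod_cast (by positivity : q ^ d + 1 ≠ 0)
  rw [qEulerChi, tsum_eq_sum_range_tsum (summable_qEulerChi_term hq0 hq1 χ α n (by positivity))
    hdo.pos.ne', qNum_two hq1.ne, qNumNeg_of_odd hdo, mul_sum, mul_sum]
  refine sum_congr rfl fun a _ => ?_
  simp_rw [qEulerChi_term_add_mul hq0 hdo, tsum_mul_left, ofReal_qEuler hqd]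
  push_cast
  field_simp

theorem statement9 (q : ℝ) (hq0 : 0 < q) (hq1 : q < 1)
    (α : ℕ) (hα : 1 ≤ α) (n : ℕ) (x : ℝ) (hx : 0 ≤ x)
    (d : ℕ) (hd0 : 0 < d) (hdo : Odd d) (χ : DirichletCharacter ℂ d) :
    qEulerChi q d χ α n ((d : ℝ) * x) =
      (((qNum (q ^ α) d) ^ n / qNumNeg q d : ℝ) : ℂ) *
        ∑ a ∈ Finset.range d,
          (-1 : ℂ) ^ a * χ (a : ZMod d) * (q : ℂ) ^ a *
            ((qEuler (q ^ d) α n (x + (a : ℝ) / d) : ℝ) : ℂ) :=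
  statement9_general q hq0 hq1 α n x hx d hdo χ
end

section
/- Let q be real with 0 < q < 1, α ≥ 1 an integer, d an odd positive integer, χ a Dirichlet character modulo d, F an odd positive integer divisible by d, 0 ≤ a < F an integer, x > 0 real, and n ≥ 0 an integer. Then H_q^χ(−n : x : a : F | α) = ( [2:q] / [2:q^F] ) · q^a (−1)^a χ(a) [F:q^α]^n · Ẽ_{n,q^F}( (x+a)/F | α ). -/
open scoped BigOperators

/-- Partial Dirichlet-type zeta function
`H_q^χ(s : x : a : F | α) = [2:q] ∑_{m ≡ a (mod F)} q^m χ(m) (-1)^m [x+m:q^α]^{-s}`,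
the sum over `m ≥ 0` with `m ≡ a (mod F)` being parametrized by `m = a + F j`, `j ≥ 0`. -/
noncomputable def qPartialZeta (q : ℝ) (d : ℕ) (χ : DirichletCharacter ℂ d) (α : ℕ)
    (s : ℂ) (x : ℝ) (a F : ℕ) : ℂ :=
  (qNum q 2 : ℂ) *
    ∑' j : ℕ, (q : ℂ) ^ (a + F * j) * χ ((a + F * j : ℕ) : ZMod d) * (-1 : ℂ) ^ (a + F * j) *
      ((qNum (q ^ α) (x + ((a + F * j : ℕ) : ℝ)) : ℝ) : ℂ) ^ (-s)

/-!
Write `m = a + F j`. Since `d ∣ F`, `χ(m) = χ(a)`; since `F` is odd, `(-1)^m = (-1)^a (-1)^j`;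
and `x + m = F (j + (x+a)/F)` gives `[x+m : q^α] = [F : q^α] [j + (x+a)/F : q^{Fα}]`.
So each term of `H` is a fixed factor times the `j`-th term of the series defining
`Ẽ_{n,q^F}((x+a)/F | α)`, and the sums agree up to the normalisations `[2:q]` and `[2:q^F]`.
-/

lemma qNum_two_s11 {q : ℝ} (hq : q ≠ 1) : qNum q 2 = q + 1 := by
  have hq' : q - 1 ≠ 0 := sub_ne_zero.mpr hq
  rw [qNum, Real.rpow_two, div_eq_iff hq']
  ring

lemma qNum_natCast_mul_s11 {r : ℝ} (hr : 0 ≤ r) (F : ℕ) (y : ℝ) :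
    qNum r (F * y) = qNum r F * qNum (r ^ F) y := by
  rcases eq_or_ne r 1 with rfl | hr1
  · simp [qNum] -- `qNum 1 _ = 0` because division by zero gives `0`
  rcases eq_or_ne F 0 with rfl | hF
  · simp [qNum]
  have hrF : r ^ F - 1 ≠ 0 := sub_ne_zero.mpr (mt (pow_eq_one_iff_of_nonneg hr hF).mp hr1)
  have hr' : r - 1 ≠ 0 := sub_ne_zero.mpr hr1
  rw [qNum, qNum, qNum, Real.rpow_mul hr, Real.rpow_natCast]
  field_simp

lemma ZMod.natCast_add_mul_of_dvd {d F : ℕ} (hdF : d ∣ F) (a j : ℕ) :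
    ((a + F * j : ℕ) : ZMod d) = a := by
  have hF : (F : ZMod d) = 0 := (ZMod.natCast_eq_zero_iff F d).mpr hdF
  push_cast [hF]
  ring

lemma neg_one_pow_add_mul_of_odd {R : Type*} [Monoid R] [HasDistribNeg R] {F : ℕ} (hF : Odd F)
    (a j : ℕ) : (-1 : R) ^ (a + F * j) = (-1) ^ a * (-1) ^ j := by
  rw [pow_add, pow_mul, hF.neg_one_pow]

lemma qNum_add_natCast_add_mul {q : ℝ} (hq : 0 ≤ q) (α : ℕ) {F : ℕ} (hF : F ≠ 0)
    (x : ℝ) (a j : ℕ) :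
    qNum (q ^ α) (x + (a + F * j : ℕ)) = qNum (q ^ α) F * qNum ((q ^ F) ^ α) (j + (x + a) / F) := by
  have hF' : (F : ℝ) ≠ 0 := Nat.cast_ne_zero.mpr hF
  have harg : x + ((a + F * j : ℕ) : ℝ) = F * (j + (x + a) / F) := by
    push_cast
    field_simp
    ring
  rw [harg, qNum_natCast_mul_s11 (pow_nonneg hq α), ← pow_mul, ← pow_mul, mul_comm α]

theorem statement11_general (q : ℝ) (hq0 : 0 < q) (hq1 : q < 1) (α : ℕ)
    (d : ℕ) (χ : DirichletCharacter ℂ d)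
    (F : ℕ) (hF0 : 0 < F) (hFo : Odd F) (hdF : d ∣ F)
    (a : ℕ) (x : ℝ) (n : ℕ) :
    qPartialZeta q d χ α (-(n : ℂ)) x a F =
      ((qNum q 2 / qNum (q ^ F) 2 : ℝ) : ℂ) * (q : ℂ) ^ a * (-1 : ℂ) ^ a * χ (a : ZMod d) *
        ((qNum (q ^ α) F : ℝ) : ℂ) ^ n *
          ((qEuler (q ^ F) α n ((x + a) / F) : ℝ) : ℂ) := by
  have hsummand : ∀ j : ℕ,
      (q : ℂ) ^ (a + F * j) * χ ((a + F * j : ℕ) : ZMod d) * (-1 : ℂ) ^ (a + F * j) *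
        ((qNum (q ^ α) (x + ((a + F * j : ℕ) : ℝ)) : ℝ) : ℂ) ^ (-(-(n : ℂ))) =
      (q : ℂ) ^ a * (-1 : ℂ) ^ a * χ (a : ZMod d) * ((qNum (q ^ α) F : ℝ) : ℂ) ^ n *
        (((-1 : ℝ) ^ j * (q ^ F) ^ j * qNum ((q ^ F) ^ α) (j + (x + a) / F) ^ n : ℝ) : ℂ) := by
    intro j
    rw [neg_neg, Complex.cpow_natCast, ZMod.natCast_add_mul_of_dvd hdF,
      neg_one_pow_add_mul_of_odd hFo, qNum_add_natCast_add_mul hq0.le α hF0.ne']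
    push_cast
    ring
  have hden : ((qNum (q ^ F) 2 : ℝ) : ℂ) ≠ 0 := by
    rw [qNum_two_s11 (pow_lt_one₀ hq0.le hq1 hF0.ne').ne]
    exact_mod_cast (by positivity : q ^ F + 1 ≠ 0)
  rw [qPartialZeta, tsum_congr hsummand, tsum_mul_left, ← Complex.ofReal_tsum, qEuler,
    Complex.ofReal_mul, Complex.ofReal_div]
  generalize (∑' j : ℕ, _ : ℝ) = E
  field_simp

theorem statement11 (q : ℝ) (hq0 : 0 < q) (hq1 : q < 1) (α : ℕ) (hα : 1 ≤ α)
    (d : ℕ) (hd0 : 0 < d) (hdo : Odd d) (χ : DirichletCharacter ℂ d)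
    (F : ℕ) (hF0 : 0 < F) (hFo : Odd F) (hdF : d ∣ F)
    (a : ℕ) (ha : a < F) (x : ℝ) (hx : 0 < x) (n : ℕ) :
    qPartialZeta q d χ α (-(n : ℂ)) x a F =
      ((qNum q 2 / qNum (q ^ F) 2 : ℝ) : ℂ) * (q : ℂ) ^ a * (-1 : ℂ) ^ a * χ (a : ZMod d) *
        ((qNum (q ^ α) F : ℝ) : ℂ) ^ n *
          ((qEuler (q ^ F) α n ((x + a) / F) : ℝ) : ℂ) :=
  statement11_general q hq0 hq1 α d χ F hF0 hFo hdF a x n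
end

section
/- (Fermionic integral equation, Eq. (15).) Let p be an odd prime, let q ∈ ℤ_p satisfy |q − 1|_p < 1, and let f : ℤ_p → ℚ_p be continuous. For n ≥ 1 put I_n(g) = (1/[p^n:−q]) · Σ_{η=0}^{p^n−1} q^η (−1)^η g(η), where [p^n:−q] = ((−q)^{p^n} − 1)/(−q − 1). Let d be an odd positive integer, and suppose the sequences I_n(f) and I_n(η ↦ f(η + d)) converge in ℚ_p to limits I and J respectively, as n → ∞. Then q^d · J + (−1)^{d−1} · I = [2:q] · Σ_{l=0}^{d−1} q^l (−1)^{d−1−l} f(l), where [2:q] = (q² − 1)/(q − 1) = 1 + q. -/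
open scoped BigOperators

/-- The `q`-deformed Riemann sum
`I_n(g) = (1/[p^n:-q]) ∑_{η=0}^{p^n-1} q^η (-1)^η g(η)` in `ℚ_p`,
where `[p^n:-q] = ((-q)^{p^n} - 1)/(-q - 1)`. -/
noncomputable def fermionicSum (p : ℕ) [Fact p.Prime] (q : ℤ_[p]) (g : ℤ_[p] → ℚ_[p])
    (n : ℕ) : ℚ_[p] :=
  (((-(q : ℚ_[p])) ^ (p ^ n) - 1) / (-(q : ℚ_[p]) - 1))⁻¹ *
    ∑ η ∈ Finset.range (p ^ n), (q : ℚ_[p]) ^ η * (-1 : ℚ_[p]) ^ η * g (η : ℤ_[p])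


lemma aux_norm_one (p : ℕ) [Fact p.Prime] (u : ℚ_[p]) (hu : ‖u - 1‖ < 1) : ‖u‖ = 1 := by
  have h1 : ‖u‖ ≤ 1 := by
    have : u = (u - 1) + 1 := by ring
    rw [this]
    exact (Padic.nonarchimedean _ _).trans (max_le hu.le (by simp))
  have h2 : (1 : ℝ) ≤ ‖u‖ := by
    by_contra hlt
    push_neg at hlt
    have h0 : (1 : ℝ) = ‖(1 - u) + u‖ := by simp
    have hle : ‖(1 - u) + u‖ ≤ max ‖1 - u‖ ‖u‖ := Padic.nonarchimedean _ _
    rw [← h0] at hle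
    have : ‖1 - u‖ < 1 := by rwa [norm_sub_rev] at hu
    rcases max_cases ‖1 - u‖ ‖u‖ with ⟨he, _⟩ | ⟨he, _⟩ <;> rw [he] at hle <;> linarith
  linarith

lemma aux_pow_sub_one (p : ℕ) [Fact p.Prime] (u : ℚ_[p]) (hu : ‖u - 1‖ < 1) (i : ℕ) :
    ‖u ^ i - 1‖ ≤ ‖u - 1‖ := by
  induction i with
  | zero => simpa using norm_nonneg _
  | succ n ih =>
    have h : u ^ (n + 1) - 1 = u * (u ^ n - 1) + (u - 1) := by ring
    rw [h]
    refine (Padic.nonarchimedean _ _).trans (max_le ?_ le_rfl)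
    rw [norm_mul, aux_norm_one p u hu, one_mul]
    exact ih

lemma aux_step (p : ℕ) [Fact p.Prime] (u : ℚ_[p]) (hu : ‖u - 1‖ < 1) :
    ‖u ^ p - 1‖ ≤ max ((p : ℝ))⁻¹ ‖u - 1‖ * ‖u - 1‖ := by
  have hg : u ^ p - 1 = (∑ i ∈ Finset.range p, u ^ i) * (u - 1) := (geom_sum_mul u p).symm
  rw [hg, norm_mul]
  refine mul_le_mul_of_nonneg_right ?_ (norm_nonneg _)
  have hsplit : (∑ i ∈ Finset.range p, u ^ i)
      = (∑ i ∈ Finset.range p, (u ^ i - 1)) + (p : ℚ_[p]) := by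
    rw [Finset.sum_sub_distrib]
    simp
  rw [hsplit]
  refine (Padic.nonarchimedean _ _).trans (max_le ?_ ?_)
  · exact le_max_of_le_right <| IsUltrametricDist.norm_sum_le_of_forall_le_of_nonneg
      (norm_nonneg _) (fun i _ => aux_pow_sub_one p u hu i)
  · exact le_max_of_le_left (Padic.norm_p).le

lemma aux_tendsto_pow (p : ℕ) [Fact p.Prime] (u : ℚ_[p]) (hu : ‖u - 1‖ < 1) :
    Filter.Tendsto (fun n : ℕ => u ^ (p ^ n)) Filter.atTop (nhds 1) := by
  set c : ℝ := max ((p : ℝ))⁻¹ ‖u - 1‖ with hc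
  have hc0 : 0 ≤ c := le_max_of_le_right (norm_nonneg _)
  have hc1 : c < 1 := by
    refine max_lt ?_ hu
    rw [inv_lt_one_iff₀]
    right
    exact_mod_cast (Fact.out : p.Prime).one_lt
  have key : ∀ n : ℕ, ‖u ^ (p ^ n) - 1‖ ≤ c ^ n * ‖u - 1‖ := by
    intro n
    induction n with
    | zero => simpa using le_rfl
    | succ n ih =>
      have hlt : ‖u ^ (p ^ n) - 1‖ < 1 := by
        refine ih.trans_lt ?_
        calc c ^ n * ‖u - 1‖ ≤ 1 * ‖u - 1‖ :=
              mul_le_mul_of_nonneg_right (pow_le_one₀ hc0 hc1.le) (norm_nonneg _)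
          _ < 1 := by simpa using hu
      have hst := aux_step p (u ^ (p ^ n)) hlt
      rw [← pow_mul, ← pow_succ] at hst
      refine hst.trans ?_
      have hmax : max ((p : ℝ))⁻¹ ‖u ^ (p ^ n) - 1‖ ≤ c := by
        refine max_le (le_max_left _ _) (ih.trans ?_)
        calc c ^ n * ‖u - 1‖ ≤ 1 * ‖u - 1‖ :=
              mul_le_mul_of_nonneg_right (pow_le_one₀ hc0 hc1.le) (norm_nonneg _)
          _ ≤ c := by rw [one_mul]; exact le_max_right _ _
      calc max ((p : ℝ))⁻¹ ‖u ^ (p ^ n) - 1‖ * ‖u ^ (p ^ n) - 1‖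
          ≤ c * (c ^ n * ‖u - 1‖) := mul_le_mul hmax ih (norm_nonneg _) hc0
        _ = c ^ (n + 1) * ‖u - 1‖ := by ring
  rw [tendsto_iff_norm_sub_tendsto_zero]
  refine squeeze_zero (fun n => norm_nonneg _) key ?_
  simpa using (tendsto_pow_atTop_nhds_zero_of_lt_one hc0 hc1).mul_const ‖u - 1‖

theorem statement19 (p : ℕ) [Fact p.Prime] (hp : Odd p)
    (q : ℤ_[p]) (hq : ‖q - 1‖ < 1)
    (f : ℤ_[p] → ℚ_[p]) (hf : Continuous f)
    (d : ℕ) (hd0 : 0 < d) (hdo : Odd d)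
    (I J : ℚ_[p])
    (hI : Filter.Tendsto (fun n : ℕ => fermionicSum p q f n) Filter.atTop (nhds I))
    (hJ : Filter.Tendsto (fun n : ℕ => fermionicSum p q (fun η => f (η + (d : ℤ_[p]))) n)
      Filter.atTop (nhds J)) :
    (q : ℚ_[p]) ^ d * J + (-1 : ℚ_[p]) ^ (d - 1) * I =
      (1 + (q : ℚ_[p])) *
        ∑ l ∈ Finset.range d,
          (q : ℚ_[p]) ^ l * (-1 : ℚ_[p]) ^ (d - 1 - l) * f (l : ℤ_[p]) := by
  set q' : ℚ_[p] := (q : ℚ_[p]) with hq'def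
  have hq' : ‖q' - 1‖ < 1 := by
    have : q' - 1 = ((q - 1 : ℤ_[p]) : ℚ_[p]) := by push_cast; ring
    rw [this, ← PadicInt.norm_def]
    exact hq
  -- q' ≠ -1
  have hq1 : q' + 1 ≠ 0 := by
    intro h
    have hq2 : q' = -1 := by linear_combination h
    rw [hq2] at hq'
    have h2 : ‖(2 : ℚ_[p])‖ = 1 := by
      have hle : ‖((2 : ℤ) : ℚ_[p])‖ ≤ 1 := Padic.norm_int_le_one _
      have hnlt : ¬ ‖((2 : ℤ) : ℚ_[p])‖ < 1 := by
        rw [Padic.norm_intCast_lt_one_iff]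
        intro hdvd
        have hp2 : p ∣ 2 := by exact_mod_cast hdvd
        have hpe : p = 2 := (Nat.prime_dvd_prime_iff_eq Fact.out Nat.prime_two).mp hp2
        rcases hp with ⟨m, hm⟩
        omega
      push_cast at hle hnlt
      linarith [lt_or_eq_of_le hle]
    have : ((-1 : ℚ_[p]) - 1) = -(2 : ℚ_[p]) := by ring
    rw [this, norm_neg, h2] at hq'
    exact absurd hq' (lt_irrefl 1)
  -- the basic term function
  set a : ℕ → ℚ_[p] := fun k => (-q') ^ k * f (k : ℤ_[p]) with ha
  set D : ℚ_[p] := ∑ l ∈ Finset.range d, a l with hD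
  -- per n identity
  have key : ∀ n : ℕ,
      q' ^ d * fermionicSum p q (fun η => f (η + (d : ℤ_[p]))) n + fermionicSum p q f n
      = (((-q') ^ (p ^ n) - 1) / (-q' - 1))⁻¹ *
          (D - ∑ j ∈ Finset.range d, a (p ^ n + j)) := by
    intro n
    unfold fermionicSum
    set c : ℚ_[p] := (((-q') ^ (p ^ n) - 1) / (-q' - 1))⁻¹ with hc
    have hS2 : ∑ η ∈ Finset.range (p ^ n), q' ^ η * (-1 : ℚ_[p]) ^ η * f (η : ℤ_[p])
        = ∑ η ∈ Finset.range (p ^ n), a η := by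
      refine Finset.sum_congr rfl fun η _ => ?_
      simp only [ha]
      rw [neg_pow]
      ring
    have hS1 : q' ^ d * ∑ η ∈ Finset.range (p ^ n),
          q' ^ η * (-1 : ℚ_[p]) ^ η * f ((η : ℤ_[p]) + (d : ℤ_[p]))
        = - ∑ η ∈ Finset.range (p ^ n), a (d + η) := by
      rw [Finset.mul_sum, ← Finset.sum_neg_distrib]
      refine Finset.sum_congr rfl fun η _ => ?_
      have hcast : ((d + η : ℕ) : ℤ_[p]) = (η : ℤ_[p]) + (d : ℤ_[p]) := by push_cast; ring
      simp only [ha, hcast]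
      rw [pow_add, hdo.neg_pow q', neg_pow q' η]
      ring
    have e1 := Finset.sum_range_add a d (p ^ n)
    have e2 := Finset.sum_range_add a (p ^ n) d
    rw [Nat.add_comm (p ^ n) d] at e2
    have e3 : (∑ i ∈ Finset.range d, a i) + ∑ i ∈ Finset.range (p ^ n), a (d + i)
        = (∑ i ∈ Finset.range (p ^ n), a i) + ∑ i ∈ Finset.range d, a (p ^ n + i) :=
      e1.symm.trans e2
    calc q' ^ d * (c * ∑ η ∈ Finset.range (p ^ n),
            q' ^ η * (-1 : ℚ_[p]) ^ η * f ((η : ℤ_[p]) + (d : ℤ_[p])))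
          + c * ∑ η ∈ Finset.range (p ^ n), q' ^ η * (-1 : ℚ_[p]) ^ η * f (η : ℤ_[p])
        = c * ((q' ^ d * ∑ η ∈ Finset.range (p ^ n),
            q' ^ η * (-1 : ℚ_[p]) ^ η * f ((η : ℤ_[p]) + (d : ℤ_[p])))
          + ∑ η ∈ Finset.range (p ^ n), q' ^ η * (-1 : ℚ_[p]) ^ η * f (η : ℤ_[p])) := by ring
      _ = c * ((- ∑ η ∈ Finset.range (p ^ n), a (d + η))
          + ∑ η ∈ Finset.range (p ^ n), a η) := by rw [hS1, hS2]
      _ = c * (D - ∑ j ∈ Finset.range d, a (p ^ n + j)) := by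
          congr 1
          rw [hD]
          linear_combination -e3
  -- limit of the prefactor
  have hpow : Filter.Tendsto (fun n : ℕ => (-q') ^ (p ^ n)) Filter.atTop (nhds (-1)) := by
    have hodd : ∀ n : ℕ, (-q') ^ (p ^ n) = -(q' ^ (p ^ n)) := fun n => (hp.pow).neg_pow q'
    simp only [hodd]
    exact (aux_tendsto_pow p q' hq').neg
  have hcne : ((-1 : ℚ_[p]) - 1) / (-q' - 1) ≠ 0 := by
    apply div_ne_zero
    · intro h
      have : (2 : ℚ_[p]) = 0 := by linear_combination -h
      exact two_ne_zero this
    · intro h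
      exact hq1 (by linear_combination -h)
  have hcinv : Filter.Tendsto
      (fun n : ℕ => (((-q') ^ (p ^ n) - 1) / (-q' - 1))⁻¹) Filter.atTop
      (nhds ((((-1 : ℚ_[p]) - 1) / (-q' - 1))⁻¹)) :=
    Filter.Tendsto.inv₀ ((hpow.sub_const 1).div_const _) hcne
  -- limit of the tail sum
  have hppow : Filter.Tendsto (fun n : ℕ => ((p : ℤ_[p]) ^ n)) Filter.atTop (nhds 0) := by
    refine tendsto_pow_atTop_nhds_zero_of_norm_lt_one ?_
    rw [PadicInt.norm_p]
    rw [inv_lt_one_iff₀]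
    right
    exact_mod_cast (Fact.out : p.Prime).one_lt
  have htail : Filter.Tendsto (fun n : ℕ => ∑ j ∈ Finset.range d, a (p ^ n + j))
      Filter.atTop (nhds (-D)) := by
    rw [hD, ← Finset.sum_neg_distrib]
    refine tendsto_finset_sum _ fun j _ => ?_
    have hterm : ∀ n : ℕ, a (p ^ n + j)
        = (-q') ^ (p ^ n) * ((-q') ^ j * f ((p : ℤ_[p]) ^ n + (j : ℤ_[p]))) := by
      intro n
      have hcast : ((p ^ n + j : ℕ) : ℤ_[p]) = (p : ℤ_[p]) ^ n + (j : ℤ_[p]) := by push_cast; ring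
      simp only [ha, hcast]
      rw [pow_add]
      ring
    simp only [hterm]
    have hfarg : Filter.Tendsto (fun n : ℕ => (p : ℤ_[p]) ^ n + (j : ℤ_[p]))
        Filter.atTop (nhds ((j : ℤ_[p]))) := by
      have := hppow.add_const ((j : ℤ_[p]))
      simpa using this
    have hflim : Filter.Tendsto (fun n : ℕ => f ((p : ℤ_[p]) ^ n + (j : ℤ_[p])))
        Filter.atTop (nhds (f (j : ℤ_[p]))) := (hf.tendsto _).comp hfarg
    have := hpow.mul ((tendsto_const_nhds (x := (-q') ^ j)).mul hflim)
    simpa [ha] using this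
  -- combined limit
  have hcomb : Filter.Tendsto
      (fun n : ℕ => q' ^ d * fermionicSum p q (fun η => f (η + (d : ℤ_[p]))) n
        + fermionicSum p q f n) Filter.atTop (nhds (q' ^ d * J + I)) := by
    have := (hJ.const_mul (q' ^ d)).add hI
    simpa using this
  have hcomb2 : Filter.Tendsto
      (fun n : ℕ => q' ^ d * fermionicSum p q (fun η => f (η + (d : ℤ_[p]))) n
        + fermionicSum p q f n) Filter.atTop (nhds ((1 + q') * D)) := by
    have hlim := hcinv.mul (tendsto_const_nhds (x := D) |>.sub htail)
    have heq : (((-1 : ℚ_[p]) - 1) / (-q' - 1))⁻¹ * (D - -D) = (1 + q') * D := by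
      rw [inv_div, div_mul_eq_mul_div, div_eq_iff (by norm_num : ((-1 : ℚ_[p]) - 1) ≠ 0)]
      ring
    rw [heq] at hlim
    exact hlim.congr fun n => (key n).symm
  have hmain : q' ^ d * J + I = (1 + q') * D := tendsto_nhds_unique hcomb hcomb2
  -- finish: rewrite goal
  have hneg1 : (-1 : ℚ_[p]) ^ (d - 1) = 1 := by
    refine Even.neg_one_pow ?_
    rcases hdo with ⟨m, hm⟩
    exact ⟨m, by omega⟩
  have hrhs : ∑ l ∈ Finset.range d, q' ^ l * (-1 : ℚ_[p]) ^ (d - 1 - l) * f (l : ℤ_[p]) = D := by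
    rw [hD]
    refine Finset.sum_congr rfl fun l hl => ?_
    have hld : l ≤ d - 1 := Nat.le_sub_one_of_lt (Finset.mem_range.mp hl)
    have hparity : (-1 : ℚ_[p]) ^ (d - 1 - l) = (-1 : ℚ_[p]) ^ l := by
      have hsum : (d - 1 - l) + l = d - 1 := Nat.sub_add_cancel hld
      have heven : Even (d - 1) := by
        rcases hdo with ⟨m, hm⟩
        subst hm
        exact ⟨m, by omega⟩
      rcases Nat.even_or_odd l with he | ho
      · have : Even (d - 1 - l) := by
          rcases he with ⟨k, hk⟩
          rcases heven with ⟨m', hm'⟩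
          exact ⟨m' - k, by omega⟩
        rw [this.neg_one_pow, he.neg_one_pow]
      · have : Odd (d - 1 - l) := by
          rcases ho with ⟨k, hk⟩
          rcases heven with ⟨m', hm'⟩
          exact ⟨m' - k - 1, by omega⟩
        rw [this.neg_one_pow, ho.neg_one_pow]
    rw [hparity, ha]
    rw [neg_pow]
    ring
  rw [hneg1, one_mul, hrhs]
  exact hmain
end
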